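/- arXiv:1902.11143 — 2 statements merged into one kernel-verified Lean document; each statement's English description precedes it below -/
import Mathlib

section
/- For a plane sector S_θ of opening θ ∈ (0, π), the bottom of the spectrum of the Robin Laplacian on S_θ (Friedrichs extension of u ↦ ‖∇u‖²_{L²(S_θ)} − ‖u‖²_{L²(∂S_θ)}) satisfies E(S_θ) ≤ −sin^{−2}(θ/2), as can be shown by testing with u(x₁,x₂) = exp(−x₁/sin(θ/2)) in coordinates where S_θ = {(x₁,x₂) : |x₂| < x₁ tan(θ/2)}. -/
/-!
The test function `u = exp (-x₁ / sin (θ/2))` has `|∇u| = u / sin (θ/2)`, and explicit integration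
gives it the Rayleigh quotient `-sin⁻²(θ/2)`. Since `sInf` of a set of reals that is not bounded
below is `0`, a matching lower bound is needed as well. On the line `x₂ = y` the sector is the
half-line `x₁ > |y| / tan (θ/2)`; the one-dimensional trace inequality
`f(a)² ≤ ∫_a^∞ (ε⁻¹ f² + ε f'²)` with `ε = sin (θ/2)`, integrated over `y`, bounds the boundary
term by `‖∇u‖² + sin⁻²(θ/2) ‖u‖²`. So `-sin⁻²(θ/2)` is the least Rayleigh quotient.
-/

open MeasureTheory Set Filter Topology Real

namespace RobinSector

lemma integral_exp_neg_mul_Ioi {b : ℝ} (hb : 0 < b) :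
    ∫ x in Ioi (0 : ℝ), exp (-(b * x)) = b⁻¹ := by
  simpa [neg_mul, div_neg, div_eq_inv_mul] using integral_exp_mul_Ioi (neg_lt_zero.2 hb) 0

lemma integral_mul_exp_neg_mul_Ioi {b : ℝ} (hb : 0 < b) :
    ∫ x in Ioi (0 : ℝ), x * exp (-(b * x)) = (b ^ 2)⁻¹ := by
  have h := integral_rpow_mul_exp_neg_mul_Ioi two_pos hb
  norm_num [Gamma_two] at h
  exact h

lemma integrableOn_mul_exp_neg_mul_Ioi {b : ℝ} (hb : 0 < b) :
    IntegrableOn (fun x => x * exp (-(b * x))) (Ioi 0) :=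
  .of_integral_ne_zero (by rw [integral_mul_exp_neg_mul_Ioi hb]; positivity)

lemma abs_two_mul_mul_le {ε : ℝ} (hε : 0 < ε) (a b : ℝ) :
    |2 * a * b| ≤ ε⁻¹ * a ^ 2 + ε * b ^ 2 := by
  have h₁ := mul_nonneg (inv_pos.2 hε).le (sq_nonneg (a - ε * b))
  have h₂ := mul_nonneg (inv_pos.2 hε).le (sq_nonneg (a + ε * b))
  have hεε : ε⁻¹ * ε = 1 := inv_mul_cancel₀ hε.ne'
  rw [abs_le]
  constructor <;> nlinarith

lemma sq_apply_le_sq_opNorm {E : Type*} [SeminormedAddCommGroup E] [NormedSpace ℝ E]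
    (L : E →L[ℝ] ℝ) {v : E} (hv : ‖v‖ = 1) : L v ^ 2 ≤ ‖L‖ ^ 2 := by
  simpa [hv, sq_abs] using pow_le_pow_left₀ (norm_nonneg _) (L.le_opNorm v) 2

/-- `f a ^ 2 = -∫ (f ^ 2)'` because `f ^ 2` tends to `0` at infinity; then AM-GM. -/
theorem sq_le_integral_Ioi {f f' : ℝ → ℝ} {a ε : ℝ} (hε : 0 < ε)
    (hf : ∀ x ∈ Ici a, HasDerivAt f (f' x) x)
    (hf2 : IntegrableOn (fun x => f x ^ 2) (Ioi a))
    (hf'2 : IntegrableOn (fun x => f' x ^ 2) (Ioi a)) :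
    f a ^ 2 ≤ ∫ x in Ioi a, (ε⁻¹ * f x ^ 2 + ε * f' x ^ 2) := by
  have hderiv : ∀ x ∈ Ici a, HasDerivAt (fun x => f x ^ 2) (2 * f x * f' x) x := fun x hx => by
    simpa [mul_comm] using (hf x hx).fun_pow 2
  have hmaj : IntegrableOn (fun x => ε⁻¹ * f x ^ 2 + ε * f' x ^ 2) (Ioi a) :=
    (hf2.const_mul _).add (hf'2.const_mul _)
  have hf_meas : AEStronglyMeasurable f (volume.restrict (Ioi a)) :=
    ContinuousOn.aestronglyMeasurable (fun x hx => (hf x (mem_Ici_of_Ioi hx)).continuousAt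
      |>.continuousWithinAt) measurableSet_Ioi
  have hf'_meas : AEStronglyMeasurable f' (volume.restrict (Ioi a)) :=
    (measurable_deriv f).aestronglyMeasurable.congr <| ae_restrict_of_forall_mem measurableSet_Ioi
      fun x hx => (hf x (mem_Ici_of_Ioi hx)).deriv
  have hint : IntegrableOn (fun x => 2 * f x * f' x) (Ioi a) :=
    hmaj.mono' ((hf_meas.const_mul 2).mul hf'_meas)
      (ae_of_all _ fun x => abs_two_mul_mul_le hε (f x) (f' x))
  have hlim : Tendsto (fun x => f x ^ 2) atTop (𝓝 0) :=
    tendsto_zero_of_hasDerivAt_of_integrableOn_Ioi (fun x hx => hderiv x (mem_Ici_of_Ioi hx))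
      hint hf2
  have hftc := integral_Ioi_of_hasDerivAt_of_tendsto' hderiv hint hlim
  calc f a ^ 2 = ∫ x in Ioi a, -(2 * f x * f' x) := by rw [integral_neg, hftc]; ring
    _ ≤ _ := integral_mono hint.neg hmaj fun x =>
      (neg_le_abs _).trans (abs_two_mul_mul_le hε (f x) (f' x))

lemma hasDerivAt_comp_mk_left {F : Type*} [NormedAddCommGroup F] [NormedSpace ℝ F]
    {u : ℝ × ℝ → F} {x y : ℝ} (hu : DifferentiableAt ℝ u (x, y)) :
    HasDerivAt (fun x => u (x, y)) (fderiv ℝ u (x, y) (1, 0)) x :=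
  hu.hasFDerivAt.comp_hasDerivAt x ((hasDerivAt_id x).prodMk (hasDerivAt_const x y))

/-- The sector of opening `θ` is `sector (tan (θ/2))`. -/
def sector (t : ℝ) : Set (ℝ × ℝ) := {p | 0 < p.1 ∧ |p.2| < p.1 * t}

lemma measurableSet_sector (t : ℝ) : MeasurableSet (sector t) :=
  (measurableSet_lt measurable_const measurable_fst).inter
    (measurableSet_lt measurable_snd.abs (measurable_fst.mul_const t))

section Slices

variable {t : ℝ} (ht : 0 < t)
include ht

lemma mk_mem_sector_iff_mem_Ioo {x y : ℝ} : (x, y) ∈ sector t ↔ y ∈ Ioo (-(x * t)) (x * t) := by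
  rw [mem_Ioo, ← abs_lt]
  exact ⟨And.right, fun h => ⟨pos_of_mul_pos_left ((abs_nonneg y).trans_lt h) ht.le, h⟩⟩

lemma mk_mem_sector_iff_div_lt {x y : ℝ} : (x, y) ∈ sector t ↔ |y| / t < x := by
  rw [div_lt_iff₀ ht]
  exact ⟨And.right, fun h => ⟨pos_of_mul_pos_left ((abs_nonneg y).trans_lt h) ht.le, h⟩⟩

lemma indicator_sector_apply_eq_Ioi {E : Type*} [Zero E] (g : ℝ × ℝ → E) (x y : ℝ) :
    (sector t).indicator g (x, y) = (Ioi (|y| / t)).indicator (fun x => g (x, y)) x := by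
  simp only [indicator, mk_mem_sector_iff_div_lt ht, mem_Ioi]

lemma indicator_sector_comp_fst_apply {E : Type*} [Zero E] (g : ℝ → E) (x y : ℝ) :
    (sector t).indicator (fun p => g p.1) (x, y) =
      (Ioo (-(x * t)) (x * t)).indicator (fun _ => g x) y := by
  simp only [indicator, mk_mem_sector_iff_mem_Ioo ht]

lemma integral_indicator_sector_comp_fst (g : ℝ → ℝ) (x : ℝ) :
    ∫ y, (sector t).indicator (fun p => g p.1) (x, y) =
      (Ioi 0).indicator (fun x => 2 * t * (x * g x)) x := by
  simp only [indicator_sector_comp_fst_apply ht, integral_indicator measurableSet_Ioo,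
    setIntegral_const, Real.volume_real_Ioo, smul_eq_mul]
  rcases le_or_gt x 0 with hx | hx
  · rw [indicator_of_notMem (notMem_Ioi.2 hx), max_eq_right (by nlinarith), zero_mul]
  · rw [indicator_of_mem (mem_Ioi.2 hx), max_eq_left (by nlinarith)]
    ring

theorem integrableOn_sector_comp_fst {g : ℝ → ℝ} (hg : Measurable g)
    (hgi : IntegrableOn (fun x => x * g x) (Ioi 0)) :
    IntegrableOn (fun p => g p.1) (sector t) := by
  rw [← integrable_indicator_iff (measurableSet_sector t), Measure.volume_eq_prod]
  refine (integrable_prod_iff ?_).2 ⟨?_, ?_⟩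
  · exact ((hg.comp measurable_fst).indicator (measurableSet_sector t)).aestronglyMeasurable
  · refine ae_of_all _ fun x => ?_
    simp only [indicator_sector_comp_fst_apply ht]
    exact (integrable_indicator_iff measurableSet_Ioo).2 (integrableOn_const measure_Ioo_lt_top.ne)
  · simp only [norm_indicator_eq_indicator_norm,
      integral_indicator_sector_comp_fst ht (fun x => ‖g x‖)]
    refine (integrable_indicator_iff measurableSet_Ioi).2
      (IntegrableOn.congr_fun (hgi.norm.const_mul (2 * t)) (fun x hx => ?_) measurableSet_Ioi)
    rw [norm_mul, Real.norm_of_nonneg (le_of_lt hx)]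

theorem integral_sector_comp_fst {g : ℝ → ℝ} (hg : Measurable g)
    (hgi : IntegrableOn (fun x => x * g x) (Ioi 0)) :
    ∫ p in sector t, g p.1 = 2 * t * ∫ x in Ioi 0, x * g x := by
  have hint := (integrable_indicator_iff (measurableSet_sector t)).2
    (integrableOn_sector_comp_fst ht hg hgi)
  rw [Measure.volume_eq_prod] at hint
  rw [← integral_indicator (measurableSet_sector t), Measure.volume_eq_prod, integral_prod _ hint]
  simp only [integral_indicator_sector_comp_fst ht]
  rw [integral_indicator measurableSet_Ioi, integral_const_mul]

lemma integral_upper_ray {E : Type*} [NormedAddCommGroup E] [NormedSpace ℝ E] (f : ℝ × ℝ → E) :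
    ∫ x in Ioi (0 : ℝ), f (x, x * t) = t⁻¹ • ∫ y in Ioi (0 : ℝ), f (|y| / t, y) := by
  have h := integral_comp_mul_right_Ioi (fun y => f (|y| / t, y)) 0 ht
  rw [zero_mul] at h
  rw [← h]
  refine setIntegral_congr_fun measurableSet_Ioi fun x hx => ?_
  rw [abs_of_pos (mul_pos hx ht), mul_div_cancel_right₀ _ ht.ne']

lemma integral_lower_ray {E : Type*} [NormedAddCommGroup E] [NormedSpace ℝ E] (f : ℝ × ℝ → E) :
    ∫ x in Ioi (0 : ℝ), f (x, -(x * t)) = t⁻¹ • ∫ y in Iic (0 : ℝ), f (|y| / t, y) := by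
  have h := integral_comp_mul_right_Ioi (fun y => f (|-y| / t, -y)) 0 ht
  rw [zero_mul, integral_comp_neg_Ioi (f := fun y => f (|y| / t, y)), neg_zero] at h
  rw [← h]
  refine setIntegral_congr_fun measurableSet_Ioi fun x hx => ?_
  rw [abs_neg, abs_of_pos (mul_pos hx ht), mul_div_cancel_right₀ _ ht.ne']

theorem integral_trace_sector_le {ε : ℝ} (hε : 0 < ε) {u : ℝ × ℝ → ℝ} (hu : Differentiable ℝ u)
    (hu2 : IntegrableOn (fun p => u p ^ 2) (sector t))
    (hD : IntegrableOn (fun p => fderiv ℝ u p (1, 0) ^ 2) (sector t)) :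
    (∫ y in Iic (0 : ℝ), u (|y| / t, y) ^ 2) + ∫ y in Ioi (0 : ℝ), u (|y| / t, y) ^ 2 ≤
      ε⁻¹ * (∫ p in sector t, u p ^ 2) + ε * ∫ p in sector t, fderiv ℝ u p (1, 0) ^ 2 := by
  set W : ℝ × ℝ → ℝ := fun p => ε⁻¹ * u p ^ 2 + ε * fderiv ℝ u p (1, 0) ^ 2
  have hW : IntegrableOn W (sector t) := (hu2.const_mul _).add (hD.const_mul _)
  have hind : ∀ {g : ℝ × ℝ → ℝ}, IntegrableOn g (sector t) →
      Integrable ((sector t).indicator g) (volume.prod volume) := fun hg => by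
    rw [← Measure.volume_eq_prod]
    exact (integrable_indicator_iff (measurableSet_sector t)).2 hg
  set H : ℝ → ℝ := fun y => ∫ x, (sector t).indicator W (x, y) with hH_def
  have hH : Integrable H := (hind hW).integral_prod_right
  have htrace : ∀ᵐ y, u (|y| / t, y) ^ 2 ≤ H y := by
    filter_upwards [(hind hu2).prod_left_ae, (hind hD).prod_left_ae] with y hu2y hDy
    simp only [hH_def, indicator_sector_apply_eq_Ioi ht, integrable_indicator_iff measurableSet_Ioi,
      integral_indicator measurableSet_Ioi] at hu2y hDy ⊢
    exact sq_le_integral_Ioi hε (fun x _ => hasDerivAt_comp_mk_left (hu (x, y))) hu2y hDy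
  have htrace_on : ∀ s : Set ℝ, ∫ y in s, u (|y| / t, y) ^ 2 ≤ ∫ y in s, H y := fun s =>
    integral_mono_of_nonneg (ae_of_all _ fun _ => sq_nonneg _) hH.integrableOn
      (ae_restrict_of_ae htrace)
  calc (∫ y in Iic (0 : ℝ), u (|y| / t, y) ^ 2) + ∫ y in Ioi (0 : ℝ), u (|y| / t, y) ^ 2
      ≤ (∫ y in Iic (0 : ℝ), H y) + ∫ y in Ioi (0 : ℝ), H y :=
        add_le_add (htrace_on _) (htrace_on _)
    _ = ∫ p in sector t, W p := by
      rw [intervalIntegral.integral_Iic_add_Ioi hH.integrableOn hH.integrableOn,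
        ← integral_indicator (measurableSet_sector t), Measure.volume_eq_prod,
        integral_prod_symm _ (hind hW)]
    _ = _ := by
      rw [integral_add (hu2.const_mul _) (hD.const_mul _), integral_const_mul, integral_const_mul]

end Slices

lemma sq_exp_neg_mul (k x : ℝ) : exp (-(k * x)) ^ 2 = exp (-(2 * k * x)) := by
  rw [← exp_nat_mul]; ring_nf

lemma hasFDerivAt_exp_neg_mul_fst (k : ℝ) (p : ℝ × ℝ) :
    HasFDerivAt (fun p : ℝ × ℝ => exp (-(k * p.1)))
      (exp (-(k * p.1)) • -(k • ContinuousLinearMap.fst ℝ ℝ ℝ)) p :=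
  ((hasFDerivAt_fst.const_mul k).neg).exp

lemma sq_norm_fderiv_exp_neg_mul_fst (k : ℝ) (p : ℝ × ℝ) :
    ‖fderiv ℝ (fun p : ℝ × ℝ => exp (-(k * p.1))) p‖ ^ 2 = k ^ 2 * exp (-(2 * k * p.1)) := by
  rw [(hasFDerivAt_exp_neg_mul_fst k p).fderiv, norm_smul, norm_neg, norm_smul,
    ContinuousLinearMap.norm_fst, mul_one, mul_pow, Real.norm_of_nonneg (exp_pos _).le,
    Real.norm_eq_abs, sq_abs, sq_exp_neg_mul, mul_comm]

def H1Sector (t : ℝ) (u : ℝ × ℝ → ℝ) : Prop :=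
  Differentiable ℝ u ∧ IntegrableOn (fun p => (u p) ^ 2) (sector t) ∧
    IntegrableOn (fun p => ‖fderiv ℝ u p‖ ^ 2) (sector t) ∧
    IntegrableOn (fun x => (u (x, x * t)) ^ 2) (Ioi 0) ∧
    IntegrableOn (fun x => (u (x, -(x * t))) ^ 2) (Ioi 0)

/-- With `t = tan (θ/2)` and `c = cos (θ/2)`, `c⁻¹` is the arclength factor of the boundary rays
`x₂ = ±t x₁` parametrised by `x₁`. -/
noncomputable def robinQuotient (c t : ℝ) (u : ℝ × ℝ → ℝ) : ℝ :=
  ((∫ p in sector t, ‖fderiv ℝ u p‖ ^ 2) -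
      c⁻¹ * ((∫ x in Ioi (0 : ℝ), (u (x, x * t)) ^ 2) +
        ∫ x in Ioi (0 : ℝ), (u (x, -(x * t))) ^ 2)) /
    ∫ p in sector t, (u p) ^ 2

theorem neg_inv_sq_le_robinQuotient {c t : ℝ} (hc : 0 < c) (ht : 0 < t) {u : ℝ × ℝ → ℝ}
    (hu : H1Sector t u) (hL : 0 < ∫ p in sector t, u p ^ 2) :
    -((c * t) ^ 2)⁻¹ ≤ robinQuotient c t u := by
  obtain ⟨hdiff, hu2, hDu, -, -⟩ := hu
  set L := ∫ p in sector t, u p ^ 2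
  set G := ∫ p in sector t, ‖fderiv ℝ u p‖ ^ 2
  have hs : 0 < c * t := mul_pos hc ht
  have hD_le : ∀ p, fderiv ℝ u p (1, 0) ^ 2 ≤ ‖fderiv ℝ u p‖ ^ 2 := fun p =>
    sq_apply_le_sq_opNorm _ (by simp [Prod.norm_def])
  have hD : IntegrableOn (fun p => fderiv ℝ u p (1, 0) ^ 2) (sector t) :=
    hDu.mono' ((measurable_fderiv_apply_const ℝ u (1, 0)).pow_const 2).aestronglyMeasurable
      (ae_of_all _ fun p => by simpa only [Real.norm_of_nonneg (sq_nonneg _)] using hD_le p)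
  have hbdry : (∫ x in Ioi (0 : ℝ), u (x, x * t) ^ 2) + ∫ x in Ioi (0 : ℝ), u (x, -(x * t)) ^ 2 ≤
      t⁻¹ * ((c * t)⁻¹ * L + c * t * G) := by
    rw [integral_upper_ray ht (fun p => u p ^ 2), integral_lower_ray ht (fun p => u p ^ 2),
      smul_eq_mul, smul_eq_mul, ← mul_add, add_comm]
    refine mul_le_mul_of_nonneg_left ?_ (inv_nonneg.2 ht.le)
    calc _ ≤ _ := integral_trace_sector_le ht hs hdiff hu2 hD
      _ ≤ _ := by gcongr; exact integral_mono hD hDu hD_le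
  have hc_bdry := mul_le_mul_of_nonneg_left hbdry (inv_nonneg.2 hc.le)
  have hrhs : c⁻¹ * (t⁻¹ * ((c * t)⁻¹ * L + c * t * G)) = ((c * t) ^ 2)⁻¹ * L + G := by
    field_simp
  rw [robinQuotient, le_div_iff₀ hL]
  linarith

theorem h1Sector_exp_neg_mul_fst {t k : ℝ} (ht : 0 < t) (hk : 0 < k) :
    H1Sector t (fun p => exp (-(k * p.1))) := by
  have hk2 : 0 < 2 * k := by positivity
  have hmeas : Measurable fun x : ℝ => exp (-(2 * k * x)) := by fun_prop
  have hsq := integrableOn_sector_comp_fst ht hmeas (integrableOn_mul_exp_neg_mul_Ioi hk2)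
  have hexp : IntegrableOn (fun x : ℝ => exp (-(2 * k * x))) (Ioi 0) := by
    simpa only [neg_mul] using exp_neg_integrableOn_Ioi 0 hk2
  refine ⟨fun p => (hasFDerivAt_exp_neg_mul_fst k p).differentiableAt, ?_, ?_, ?_, ?_⟩
  · simpa only [sq_exp_neg_mul] using hsq
  · simp only [sq_norm_fderiv_exp_neg_mul_fst]
    exact hsq.const_mul (k ^ 2)
  · simpa only [sq_exp_neg_mul] using hexp
  · simpa only [sq_exp_neg_mul] using hexp

theorem integral_sector_sq_exp_neg_mul_fst {t k : ℝ} (ht : 0 < t) (hk : 0 < k) :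
    ∫ p in sector t, exp (-(k * p.1)) ^ 2 = 2 * t * ((2 * k) ^ 2)⁻¹ := by
  have hk2 : 0 < 2 * k := by positivity
  simp only [sq_exp_neg_mul]
  rw [integral_sector_comp_fst ht (by fun_prop) (integrableOn_mul_exp_neg_mul_Ioi hk2),
    integral_mul_exp_neg_mul_Ioi hk2]

theorem robinQuotient_exp_neg_mul_fst {c t : ℝ} (hc : 0 < c) (ht : 0 < t) :
    robinQuotient c t (fun p => exp (-((c * t)⁻¹ * p.1))) = -((c * t) ^ 2)⁻¹ := by
  set k := (c * t)⁻¹ with hk_def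
  have hk : 0 < k := by positivity
  have hk2 : 0 < 2 * k := by positivity
  have hL := integral_sector_sq_exp_neg_mul_fst ht hk
  simp only [robinQuotient, sq_norm_fderiv_exp_neg_mul_fst, sq_exp_neg_mul, integral_const_mul,
    integral_exp_neg_mul_Ioi hk2]
  simp only [sq_exp_neg_mul] at hL
  rw [hL, hk_def]
  field_simp
  ring

theorem isLeast_robinQuotient {c t : ℝ} (hc : 0 < c) (ht : 0 < t) :
    IsLeast {r | ∃ u, H1Sector t u ∧ 0 < ∫ p in sector t, u p ^ 2 ∧ r = robinQuotient c t u}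
      (-((c * t) ^ 2)⁻¹) := by
  have hk : 0 < (c * t)⁻¹ := by positivity
  refine ⟨⟨_, h1Sector_exp_neg_mul_fst ht hk, ?_, (robinQuotient_exp_neg_mul_fst hc ht).symm⟩, ?_⟩
  · rw [integral_sector_sq_exp_neg_mul_fst ht hk]
    positivity
  · rintro r ⟨u, hu, hL, rfl⟩
    exact neg_inv_sq_le_robinQuotient hc ht hu hL

end RobinSector

/-- For a plane sector `S_θ` of opening `θ ∈ (0, π)`, the bottom `E(S_θ)` of the
spectrum of the Robin Laplacian on `S_θ` — the infimum of the Rayleigh quotient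
`(‖∇u‖²_{L²(S_θ)} − ‖u‖²_{L²(∂S_θ)}) / ‖u‖²_{L²(S_θ)}` over nonzero `u ∈ H¹(S_θ)` —
satisfies `E(S_θ) ≤ −sin⁻²(θ/2)`, as can be shown by testing with
`u(x₁,x₂) = exp(−x₁ / sin(θ/2))` in the coordinates where
`S_θ = {(x₁,x₂) : |x₂| < x₁ tan(θ/2)}`.

The boundary term `∫_{∂S_θ} u²` is written as the sum of the two line integrals along the
half-lines `x₂ = ± x₁ tan(θ/2)`, with arclength element `dx₁ / cos(θ/2)`. -/
theorem robin_sector_energy_upper_bound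
    (θ : ℝ) (hθ : θ ∈ Set.Ioo 0 Real.pi) :
    let Sθ : Set (ℝ × ℝ) := {p : ℝ × ℝ | 0 < p.1 ∧ |p.2| < p.1 * Real.tan (θ / 2)}
    let gradSq : (ℝ × ℝ → ℝ) → ℝ := fun u => ∫ p in Sθ, ‖fderiv ℝ u p‖ ^ 2
    let l2Sq : (ℝ × ℝ → ℝ) → ℝ := fun u => ∫ p in Sθ, (u p) ^ 2
    let bdrySq : (ℝ × ℝ → ℝ) → ℝ := fun u =>
      (Real.cos (θ / 2))⁻¹ *
        ((∫ x in Set.Ioi (0 : ℝ), (u (x, x * Real.tan (θ / 2))) ^ 2) +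
          ∫ x in Set.Ioi (0 : ℝ), (u (x, -(x * Real.tan (θ / 2)))) ^ 2)
    let H1 : Set (ℝ × ℝ → ℝ) := {u | Differentiable ℝ u ∧
      IntegrableOn (fun p => (u p) ^ 2) Sθ ∧
      IntegrableOn (fun p => ‖fderiv ℝ u p‖ ^ 2) Sθ ∧
      IntegrableOn (fun x => (u (x, x * Real.tan (θ / 2))) ^ 2) (Set.Ioi 0) ∧
      IntegrableOn (fun x => (u (x, -(x * Real.tan (θ / 2)))) ^ 2) (Set.Ioi 0)}
    sInf {r : ℝ | ∃ u ∈ H1, 0 < l2Sq u ∧ r = (gradSq u - bdrySq u) / l2Sq u} ≤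
      -((Real.sin (θ / 2)) ^ 2)⁻¹ := by
  intro Sθ gradSq l2Sq bdrySq H1
  obtain ⟨hθ0, hθπ⟩ := hθ
  have hc : 0 < cos (θ / 2) := cos_pos_of_mem_Ioo ⟨by linarith, by linarith⟩
  have ht : 0 < tan (θ / 2) := tan_pos_of_pos_of_lt_pi_div_two (by linarith) (by linarith)
  have hsin : sin (θ / 2) = cos (θ / 2) * tan (θ / 2) := by
    rw [tan_eq_sin_div_cos, mul_div_cancel₀ _ hc.ne']
  rw [hsin]
  exact (RobinSector.isLeast_robinQuotient hc ht).csInf_eq.le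
end

section
/- Consider the family of operators 𝔥(k) = −d²/dx² + (a(x) − k)² on L²(ℝ), where a is C¹ with a' = B, B increasing with finite positive limits B_± as x → ±∞. Then for each j, the j-th eigenvalue λ_j(k) is a non-decreasing function of k. -/
open MeasureTheory Filter

noncomputable def shiftEquiv (y : ℝ) : (ℝ → ℝ) ≃ₗ[ℝ] (ℝ → ℝ) where
  toFun u := fun x => u (x + y)
  invFun u := fun x => u (x - y)
  map_add' u v := rfl
  map_smul' c u := rfl
  left_inv u := funext fun x => by simp
  right_inv u := funext fun x => by simp

lemma B_lower {B : ℝ → ℝ} {Bm : ℝ} (hBmono : Monotone B)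
    (hBm : Tendsto B atBot (nhds Bm)) (x : ℝ) : Bm ≤ B x :=
  le_of_tendsto hBm (eventually_atBot.2 ⟨x, fun y hy => hBmono hy⟩)

lemma B_upper {B : ℝ → ℝ} {Bp : ℝ} (hBmono : Monotone B)
    (hBp : Tendsto B atTop (nhds Bp)) (x : ℝ) : B x ≤ Bp :=
  ge_of_tendsto hBp (eventually_atTop.2 ⟨x, fun y hy => hBmono hy⟩)

lemma a_incr_bounds {a B : ℝ → ℝ} {Bm Bp : ℝ} (ha : ContDiff ℝ 1 a) (haB : deriv a = B)
    (hBl : ∀ x, Bm ≤ B x) (hBu : ∀ x, B x ≤ Bp) :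
    ∀ z y : ℝ, 0 ≤ y → Bm * y ≤ a z - a (z - y) ∧ a z - a (z - y) ≤ Bp * y := by
  have hdiff : Differentiable ℝ a := ha.differentiable one_ne_zero
  have hlin : ∀ (c : ℝ) (x : ℝ), HasDerivAt (fun x : ℝ => c * x) c x := by
    intro c x; simpa using (hasDerivAt_id x).const_mul c
  have hd1 : ∀ x, HasDerivAt (fun x => a x - Bm * x) (B x - Bm) x := by
    intro x
    have := ((hdiff x).hasDerivAt).sub (hlin Bm x)
    rwa [haB] at this
  have hd2 : ∀ x, HasDerivAt (fun x => Bp * x - a x) (Bp - B x) x := by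
    intro x
    have := (hlin Bp x).sub ((hdiff x).hasDerivAt)
    rwa [haB] at this
  have h1 : Monotone (fun x => a x - Bm * x) := by
    apply monotone_of_deriv_nonneg (fun x => (hd1 x).differentiableAt)
    intro x; rw [(hd1 x).deriv]; linarith [hBl x]
  have h2 : Monotone (fun x => Bp * x - a x) := by
    apply monotone_of_deriv_nonneg (fun x => (hd2 x).differentiableAt)
    intro x; rw [(hd2 x).deriv]; linarith [hBu x]
  intro z y hy
  constructor
  · have := h1 (show z - y ≤ z by linarith); simp only at this; nlinarith
  · have := h2 (show z - y ≤ z by linarith); simp only at this; nlinarith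

lemma a_surjective {a B : ℝ → ℝ} {Bm Bp : ℝ} (ha : ContDiff ℝ 1 a) (haB : deriv a = B)
    (hBl : ∀ x, Bm ≤ B x) (hBu : ∀ x, B x ≤ Bp) (hBm_pos : 0 < Bm) :
    Function.Surjective a := by
  have hmul : Tendsto (fun x : ℝ => Bm * x) atTop atTop := by
    simpa using tendsto_id.const_mul_atTop (r := Bm) hBm_pos
  have hmulb : Tendsto (fun x : ℝ => Bm * x) atBot atBot := by
    simpa using tendsto_id.const_mul_atBot (r := Bm) hBm_pos
  apply Continuous.surjective ha.continuous
  · -- atTop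
    apply tendsto_atTop_mono' atTop _ (tendsto_atTop_add_const_left atTop (a 0) hmul)
    filter_upwards [eventually_ge_atTop (0:ℝ)] with x hx
    have := (a_incr_bounds ha haB hBl hBu x x hx).1
    simp only [sub_self] at this
    nlinarith
  · -- atBot
    apply tendsto_atBot_mono' atBot _ (tendsto_atBot_add_const_left atBot (a 0) hmulb)
    filter_upwards [eventually_le_atBot (0:ℝ)] with x hx
    have := (a_incr_bounds ha haB hBl hBu 0 (-x) (by linarith)).1
    simp only [sub_neg_eq_add, zero_add] at this
    nlinarith

lemma key_ptwise {a B : ℝ → ℝ} (ha : ContDiff ℝ 1 a) (haB : deriv a = B)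
    (hBmono : Monotone B) (hBnn : ∀ x, 0 ≤ B x) {k k' c c' : ℝ}
    (hc : a c = k) (hc' : a c' = k') (hy : c ≤ c') :
    ∀ x : ℝ, (a (x - (c' - c)) - k) ^ 2 ≤ (a x - k') ^ 2 := by
  set y := c' - c with hydef
  have hy0 : 0 ≤ y := by simp only [hydef]; linarith
  have hdiff : Differentiable ℝ a := ha.differentiable one_ne_zero
  have hdshift : ∀ x, HasDerivAt (fun z => a (z - y)) (B (x - y)) x := by
    intro x
    have h0 : HasDerivAt (fun z : ℝ => z - y) 1 x := (hasDerivAt_id x).sub_const y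
    have := ((hdiff (x - y)).hasDerivAt).comp x h0
    simpa [haB, Function.comp_def] using this
  have hF : Monotone (fun x => a x - a (x - y)) := by
    apply monotone_of_deriv_nonneg
    · exact fun x => (((hdiff x).hasDerivAt).sub (hdshift x)).differentiableAt
    · intro x
      rw [HasDerivAt.deriv (f := fun x => a x - a (x - y)) (((hdiff x).hasDerivAt).sub (hdshift x)), haB]
      have := hBmono (show x - y ≤ x by linarith)
      linarith
  have hG : Monotone (fun x => a x + a (x - y)) := by
    apply monotone_of_deriv_nonneg
    · exact fun x => (((hdiff x).hasDerivAt).add (hdshift x)).differentiableAt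
    · intro x
      rw [HasDerivAt.deriv (f := fun x => a x + a (x - y)) (((hdiff x).hasDerivAt).add (hdshift x)), haB]
      have h1 := hBnn x
      have h2 := hBnn (x - y)
      linarith
  have hcy : c' - y = c := by simp only [hydef]; ring
  intro x
  rcases le_total c' x with hx | hx
  · have h1 := hF hx
    have h2 := hG hx
    simp only [hcy, hc, hc'] at h1 h2
    nlinarith
  · have h1 := hF hx
    have h2 := hG hx
    simp only [hcy, hc, hc'] at h1 h2
    nlinarith

lemma integrable_form {u w : ℝ → ℝ} (hu : ContDiff ℝ (⊤ : ℕ∞) u) (hs : HasCompactSupport u)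
    (hw : Continuous w) :
    Integrable (fun x => (deriv u x) ^ 2 + (w x) ^ 2 * (u x) ^ 2) := by
  have hderiv_cont : Continuous (deriv u) := hu.continuous_deriv (by simp)
  have hcont : Continuous (fun x => (deriv u x) ^ 2 + (w x) ^ 2 * (u x) ^ 2) :=
    ((hderiv_cont.pow 2).add ((hw.pow 2).mul (hu.continuous.pow 2)))
  apply hcont.integrable_of_hasCompactSupport
  have h1 : HasCompactSupport (fun x => (deriv u x) ^ 2) :=
    (hs.deriv).comp_left (g := fun z : ℝ => z ^ 2) (by simp)
  have h2 : HasCompactSupport (fun x => (u x) ^ 2) :=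
    hs.comp_left (g := fun z : ℝ => z ^ 2) (by simp)
  have h3 : HasCompactSupport (fun x => (w x) ^ 2 * (u x) ^ 2) := h2.mul_left
  exact h1.add h3

lemma integrable_sq {u : ℝ → ℝ} (hc : Continuous u) (hs : HasCompactSupport u) :
    Integrable (fun x => (u x) ^ 2) := by
  have h : HasCompactSupport (fun x => (u x) ^ 2) := hs.comp_left (g := fun z : ℝ => z ^ 2) (by simp)
  exact (hc.pow 2).integrable_of_hasCompactSupport h

lemma sq_integral_pos {u : ℝ → ℝ} (hc : Continuous u) (hs : HasCompactSupport u) (hu : u ≠ 0) :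
    0 < ∫ x : ℝ, (u x) ^ 2 := by
  rw [integral_pos_iff_support_of_nonneg (fun x => sq_nonneg (u x)) (integrable_sq hc hs)]
  have hsupp : Function.support (fun x => (u x) ^ 2) = Function.support u := by
    ext x; simp [pow_eq_zero_iff]
  rw [hsupp]
  have hopen : IsOpen (Function.support u) := hc.isOpen_support
  obtain ⟨x, hx⟩ : ∃ x, u x ≠ 0 := by
    by_contra h
    push_neg at h
    exact hu (funext h)
  exact hopen.measure_pos volume ⟨x, hx⟩


/-- Consider the family of operators `𝔥(k) = −d²/dx² + (a(x) − k)²` on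
`L²(ℝ)`, where `a` is `C¹` with `a' = B`, `B` increasing with finite positive limits `B±` as
`x → ±∞` (Iwatsuka fiber operator).  Then for each `j`, the `j`-th eigenvalue `λ_j(k)`,
defined via the min-max (Courant–Fischer) principle over `j`-dimensional subspaces of test
functions for the form `u ↦ ∫ (|u'|² + (a(x)−k)² |u|²)`, is a non-decreasing function of
`k`. -/
theorem iwatsuka_band_functions_monotone
    (a B : ℝ → ℝ) (Bp Bm : ℝ)
    (ha : ContDiff ℝ 1 a) (haB : deriv a = B)
    (hBmono : Monotone B)
    (hBp : Tendsto B atTop (nhds Bp)) (hBm : Tendsto B atBot (nhds Bm))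
    (hBm_pos : 0 < Bm) (hBp_pos : 0 < Bp)
    (j : ℕ) (hj : 1 ≤ j) :
    let Q : ℝ → (ℝ → ℝ) → ℝ := fun k u =>
      ∫ x : ℝ, ((deriv u x) ^ 2 + (a x - k) ^ 2 * (u x) ^ 2)
    let N : (ℝ → ℝ) → ℝ := fun u => ∫ x : ℝ, (u x) ^ 2
    let lam : ℝ → ℝ := fun k =>
      sInf {r : ℝ | ∃ V : Submodule ℝ (ℝ → ℝ),
        (∀ u ∈ V, ContDiff ℝ (⊤ : ℕ∞) u ∧ HasCompactSupport u) ∧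
        Module.finrank ℝ V = j ∧
        r = sSup {s : ℝ | ∃ u ∈ V, 0 < N u ∧ s = Q k u / N u}}
    Monotone lam := by
  intro Q N lam
  have hBl : ∀ x, Bm ≤ B x := fun x => B_lower hBmono hBm x
  have hBu : ∀ x, B x ≤ Bp := fun x => B_upper hBmono hBp x
  have hBnn : ∀ x, 0 ≤ B x := fun x => le_trans hBm_pos.le (hBl x)
  have hconta : Continuous a := ha.continuous
  have hsurj : Function.Surjective a := a_surjective ha haB hBl hBu hBm_pos
  have hsm : StrictMono a :=
    strictMono_of_deriv_pos (fun x => by rw [haB]; exact lt_of_lt_of_le hBm_pos (hBl x))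
  -- general facts about Q and N
  have hQnonneg : ∀ κ (u : ℝ → ℝ), 0 ≤ Q κ u := by
    intro κ u
    apply integral_nonneg
    intro x
    exact add_nonneg (sq_nonneg _) (mul_nonneg (sq_nonneg _) (sq_nonneg _))
  -- any r in the min-max set is nonnegative
  have hSnonneg : ∀ κ r, (r ∈ {r : ℝ | ∃ V : Submodule ℝ (ℝ → ℝ),
        (∀ u ∈ V, ContDiff ℝ (⊤ : ℕ∞) u ∧ HasCompactSupport u) ∧
        Module.finrank ℝ V = j ∧
        r = sSup {s : ℝ | ∃ u ∈ V, 0 < N u ∧ s = Q κ u / N u}}) → 0 ≤ r := by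
    rintro κ r ⟨V, hreg, hrank, rfl⟩
    set T := {s : ℝ | ∃ u ∈ V, 0 < N u ∧ s = Q κ u / N u} with hT
    by_cases hbdd : BddAbove T
    · -- get a nonzero element of V
      have hVne : V ≠ ⊥ := by
        intro h
        rw [h, finrank_bot] at hrank
        omega
      obtain ⟨u, huV, hune⟩ := Submodule.exists_mem_ne_zero_of_ne_bot hVne
      have hNu : 0 < N u :=
        sq_integral_pos (hreg u huV).1.continuous (hreg u huV).2 hune
      have hmem : Q κ u / N u ∈ T := ⟨u, huV, hNu, rfl⟩
      exact le_trans (div_nonneg (hQnonneg κ u) hNu.le) (le_csSup hbdd hmem)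
    · rw [Real.sSup_of_not_bddAbove hbdd]
  intro k k' hkk'
  simp only [lam]
  set S := {r : ℝ | ∃ V : Submodule ℝ (ℝ → ℝ),
        (∀ u ∈ V, ContDiff ℝ (⊤ : ℕ∞) u ∧ HasCompactSupport u) ∧
        Module.finrank ℝ V = j ∧
        r = sSup {s : ℝ | ∃ u ∈ V, 0 < N u ∧ s = Q k u / N u}} with hS
  set S' := {r : ℝ | ∃ V : Submodule ℝ (ℝ → ℝ),
        (∀ u ∈ V, ContDiff ℝ (⊤ : ℕ∞) u ∧ HasCompactSupport u) ∧
        Module.finrank ℝ V = j ∧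
        r = sSup {s : ℝ | ∃ u ∈ V, 0 < N u ∧ s = Q k' u / N u}} with hS'
  -- choose the shift
  obtain ⟨c, hc⟩ := hsurj k
  obtain ⟨c', hc'⟩ := hsurj k'
  have hcc' : c ≤ c' := hsm.le_iff_le.1 (by rw [hc, hc']; exact hkk')
  set y := c' - c with hydef
  have hy0 : 0 ≤ y := by simp only [hydef]; linarith
  have hkey : ∀ x : ℝ, (a (x - y) - k) ^ 2 ≤ (a x - k') ^ 2 :=
    key_ptwise ha haB hBmono hBnn hc hc' hcc'
  set C := (Bp - Bm) * y with hC
  have hC0 : 0 ≤ C := mul_nonneg (by linarith [hBl 0, hBu 0]) hy0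
  set e := shiftEquiv y with he
  -- the main comparison: from r' ∈ S' produce r ∈ S with r ≤ r'
  have main : ∀ r' ∈ S', ∃ r ∈ S, r ≤ r' := by
    rintro r' ⟨V', hreg', hrank', rfl⟩
    set V := V'.map e.toLinearMap with hV
    have hev : ∀ v : ℝ → ℝ, (e.toLinearMap v : ℝ → ℝ) = fun x => v (x + y) := fun v => rfl
    have hreg : ∀ u ∈ V, ContDiff ℝ (⊤ : ℕ∞) u ∧ HasCompactSupport u := by
      rintro u hu
      obtain ⟨v, hvV', rfl⟩ := Submodule.mem_map.1 hu
      obtain ⟨hv1, hv2⟩ := hreg' v hvV'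
      rw [hev]
      constructor
      · exact hv1.comp (contDiff_id.add contDiff_const)
      · have := hv2.comp_homeomorph (Homeomorph.addRight y)
        simpa [Function.comp_def] using this
    have hrank : Module.finrank ℝ V = j := by
      rw [hV, LinearEquiv.finrank_map_eq]; exact hrank'
    -- per-element facts
    have hNeq : ∀ v : ℝ → ℝ, N (e.toLinearMap v) = N v := by
      intro v
      show (∫ x : ℝ, (v (x + y)) ^ 2) = ∫ x : ℝ, (v x) ^ 2
      exact integral_add_right_eq_self (fun x => (v x) ^ 2) y
    have hQshift : ∀ v : ℝ → ℝ, ContDiff ℝ (⊤ : ℕ∞) v → HasCompactSupport v →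
        Q k (e.toLinearMap v) =
          ∫ x : ℝ, ((deriv v x) ^ 2 + (a (x - y) - k) ^ 2 * (v x) ^ 2) := by
      intro v hv1 hv2
      have hder : ∀ x : ℝ, deriv (fun z => v (z + y)) x = deriv v (x + y) := by
        intro x; exact deriv_comp_add_const v y x
      have : Q k (e.toLinearMap v)
          = ∫ x : ℝ, ((fun z => (deriv v z) ^ 2 + (a (z - y) - k) ^ 2 * (v z) ^ 2) (x + y)) := by
        show (∫ x : ℝ, ((deriv (fun z => v (z + y)) x) ^ 2 + (a x - k) ^ 2 * (v (x + y)) ^ 2)) = _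
        congr 1
        funext x
        simp only [hder, add_sub_cancel_right]
      rw [this]
      exact integral_add_right_eq_self (fun z => (deriv v z) ^ 2 + (a (z - y) - k) ^ 2 * (v z) ^ 2) y
    have hQle : ∀ v : ℝ → ℝ, ContDiff ℝ (⊤ : ℕ∞) v → HasCompactSupport v →
        Q k (e.toLinearMap v) ≤ Q k' v := by
      intro v hv1 hv2
      rw [hQshift v hv1 hv2]
      apply integral_mono
      · exact integrable_form hv1 hv2 ((hconta.comp (continuous_id.sub continuous_const)).sub continuous_const)
      · exact integrable_form hv1 hv2 (hconta.sub continuous_const)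
      · intro x
        exact add_le_add_right (mul_le_mul_of_nonneg_right (hkey x) (sq_nonneg _)) _
    have hQge : ∀ v : ℝ → ℝ, ContDiff ℝ (⊤ : ℕ∞) v → HasCompactSupport v →
        Q k' v ≤ 2 * Q k (e.toLinearMap v) + (2 * C ^ 2) * N v := by
      intro v hv1 hv2
      rw [hQshift v hv1 hv2]
      have hptw : ∀ x : ℝ, (a x - k') ^ 2 ≤ 2 * (a (x - y) - k) ^ 2 + 2 * C ^ 2 := by
        intro x
        have hb1 := a_incr_bounds ha haB hBl hBu x y hy0
        have hb2 := a_incr_bounds ha haB hBl hBu c' y hy0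
        have hcy : c' - y = c := by simp only [hydef]; ring
        rw [hcy, hc, hc'] at hb2
        set q := a (x - y) - k with hq
        have hxk : a x - k' = q + ((a x - a (x - y)) - (k' - k)) := by simp only [hq]; ring
        rw [hxk]
        have h1 : ((a x - a (x - y)) - (k' - k)) ^ 2 ≤ C ^ 2 := by
          simp only [hC]
          nlinarith [hb1.1, hb1.2, hb2.1, hb2.2]
        nlinarith [sq_nonneg (q - ((a x - a (x - y)) - (k' - k)))]
      have hint1 : Integrable (fun x : ℝ => (deriv v x) ^ 2 + (a x - k') ^ 2 * (v x) ^ 2) :=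
        integrable_form hv1 hv2 (hconta.sub continuous_const)
      have hint2 : Integrable (fun x : ℝ => (deriv v x) ^ 2 + (a (x - y) - k) ^ 2 * (v x) ^ 2) :=
        integrable_form hv1 hv2 ((hconta.comp (continuous_id.sub continuous_const)).sub continuous_const)
      have hint3 : Integrable (fun x : ℝ => (v x) ^ 2) := integrable_sq hv1.continuous hv2
      calc Q k' v ≤ ∫ x : ℝ, (2 * ((deriv v x) ^ 2 + (a (x - y) - k) ^ 2 * (v x) ^ 2)
              + (2 * C ^ 2) * (v x) ^ 2) := by
            apply integral_mono hint1 ((hint2.const_mul 2).add (hint3.const_mul (2 * C ^ 2)))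
            intro x
            have := hptw x
            have h2 := sq_nonneg (v x)
            have h3 := sq_nonneg (deriv v x)
            simp only [Pi.add_apply]
            nlinarith
        _ = 2 * (∫ x : ℝ, ((deriv v x) ^ 2 + (a (x - y) - k) ^ 2 * (v x) ^ 2))
              + (2 * C ^ 2) * ∫ x : ℝ, (v x) ^ 2 := by
            rw [integral_add (hint2.const_mul 2) (hint3.const_mul (2 * C ^ 2)),
              integral_const_mul, integral_const_mul]
    -- T and T'
    set T := {s : ℝ | ∃ u ∈ V, 0 < N u ∧ s = Q k u / N u} with hT
    set T' := {s : ℝ | ∃ u ∈ V', 0 < N u ∧ s = Q k' u / N u} with hT'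
    refine ⟨sSup T, ⟨V, hreg, hrank, rfl⟩, ?_⟩
    -- T nonempty
    have hVne : V ≠ ⊥ := by
      intro h
      rw [h, finrank_bot] at hrank
      omega
    obtain ⟨u0, hu0V, hu0ne⟩ := Submodule.exists_mem_ne_zero_of_ne_bot hVne
    have hTne : T.Nonempty := by
      refine ⟨Q k u0 / N u0, u0, hu0V, ?_, rfl⟩
      exact sq_integral_pos (hreg u0 hu0V).1.continuous (hreg u0 hu0V).2 hu0ne
    by_cases hbdd' : BddAbove T'
    · apply csSup_le hTne
      rintro s ⟨u, huV, hNu, rfl⟩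
      obtain ⟨v, hvV', rfl⟩ := Submodule.mem_map.1 huV
      obtain ⟨hv1, hv2⟩ := hreg' v hvV'
      have hNv : 0 < N v := by rw [← hNeq v]; exact hNu
      have h1 : Q k (e.toLinearMap v) / N (e.toLinearMap v) ≤ Q k' v / N v := by
        rw [hNeq v]
        exact div_le_div_of_nonneg_right (hQle v hv1 hv2) hNv.le
      exact le_trans h1 (le_csSup hbdd' ⟨v, hvV', hNv, rfl⟩)
    · -- T' unbounded: show T unbounded too
      have hbdd : ¬ BddAbove T := by
        rintro ⟨M, hM⟩
        apply hbdd'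
        refine ⟨2 * M + 2 * C ^ 2, ?_⟩
        rintro s ⟨v, hvV', hNv, rfl⟩
        obtain ⟨hv1, hv2⟩ := hreg' v hvV'
        have hNev : 0 < N (e.toLinearMap v) := by rw [hNeq v]; exact hNv
        have hmemT : Q k (e.toLinearMap v) / N (e.toLinearMap v) ∈ T :=
          ⟨e.toLinearMap v, Submodule.mem_map_of_mem hvV', hNev, rfl⟩
        have hMle : Q k (e.toLinearMap v) / N (e.toLinearMap v) ≤ M := hM hmemT
        have := hQge v hv1 hv2
        rw [div_le_iff₀ hNv]
        rw [div_le_iff₀ hNev, hNeq v] at hMle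
        calc Q k' v ≤ 2 * Q k (e.toLinearMap v) + (2 * C ^ 2) * N v := this
          _ ≤ 2 * (M * N v) + (2 * C ^ 2) * N v := by nlinarith
          _ = (2 * M + 2 * C ^ 2) * N v := by ring
      rw [Real.sSup_of_not_bddAbove hbdd, Real.sSup_of_not_bddAbove hbdd']
  -- conclude
  rcases Set.eq_empty_or_nonempty S' with hS'e | hS'ne
  · have hSe : S = ∅ := by
      rw [Set.eq_empty_iff_forall_notMem]
      rintro r ⟨V, hreg, hrank, -⟩
      rw [Set.eq_empty_iff_forall_notMem] at hS'e
      exact hS'e (sSup {s : ℝ | ∃ u ∈ V, 0 < N u ∧ s = Q k' u / N u}) ⟨V, hreg, hrank, rfl⟩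
    rw [hSe, hS'e]
  · apply le_csInf hS'ne
    intro r' hr'
    obtain ⟨r, hrS, hle⟩ := main r' hr'
    exact le_trans (csInf_le ⟨0, fun x hx => hSnonneg k x hx⟩ hrS) hle
end
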